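/- The largest eigenvalue μ of the Laplacian matrix of the graph H strictly exceeds max over all pairs of adjacent vertices v ~ j of 2 + (m_v + m_j) − (d_v + d_j) + √(2·(d_v² + d_j²) − 4·(m_v + m_j) + 4). (This gives a counterexample to conjectured bound 41 of Brankov, Hansen and Stevanović.) -/

import Mathlib

set_option maxHeartbeats 1600000

/-- The edge list of the graph. -/
def edgeList : List (Fin 20 × Fin 20) :=
  [(0,1),(0,2),(0,3),(0,4),(0,5),(0,6),(0,7),(0,8),(0,9),(0,10),(0,11),(0,12),(0,13),(0,14),(0,15),(0,16),(0,17),(0,18),(0,19),(1,3),(1,7),(1,13),(2,6),(2,12),(2,14),(3,5),(3,14),(4,5),(4,16),(4,18),(5,12),(6,14),(6,16),(6,17),(7,8),(7,18),(8,13),(8,17),(9,12),(9,15),(9,19),(10,11),(10,15),(10,19),(11,15),(11,18),(13,16),(17,19)]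

/-- The graph under consideration. -/
def G : SimpleGraph (Fin 20) where
  Adj v w := (v, w) ∈ edgeList ∨ (w, v) ∈ edgeList
  symm := ⟨fun _ _ h => h.symm⟩
  loopless := ⟨by intro v; fin_cases v <;> decide⟩

instance : DecidableRel G.Adj :=
  fun v w => inferInstanceAs (Decidable ((v, w) ∈ edgeList ∨ (w, v) ∈ edgeList))

/-- `d v` is the degree of the vertex `v`, as a real number. -/
noncomputable def d (v : Fin 20) : ℝ := G.degree v

/-- `m v` is the average of the degrees of the neighbours of `v`. -/
noncomputable def m (v : Fin 20) : ℝ :=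
  (∑ u ∈ G.neighborFinset v, (G.degree u : ℝ)) / d v

/-- table of degrees -/
def dt : Fin 20 → ℕ := fun i => if i = 0 then 19 else if i = 6 then 5 else 4

/-- table of sums of degrees over neighbourhoods -/
def st : Fin 20 → ℕ := fun i =>
  if i = 0 then 77 else if i = 2 then 32 else if i = 6 then 35 else
  if i = 14 then 32 else if i = 16 then 32 else if i = 17 then 32 else 31

lemma hdeg : ∀ i : Fin 20, G.degree i = dt i := by decide

lemma hsum : ∀ i : Fin 20, ∑ u ∈ G.neighborFinset i, G.degree u = st i := by decide

lemma d_eq (v : Fin 20) : d v = (dt v : ℝ) := by simp [d, hdeg v]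

lemma m_eq (v : Fin 20) : m v = (st v : ℝ) / (dt v : ℝ) := by
  simp [m, d, hdeg v, ← Nat.cast_sum, hsum v]

lemma d0 : d 0 = 19 := by rw [d_eq]; norm_num [dt]

lemma m0 : m 0 = 77 / 19 := by rw [m_eq]; norm_num [dt, st]

lemma small (v : Fin 20) (hv : v ≠ 0) :
    4 ≤ d v ∧ d v ≤ 5 ∧ 7 ≤ m v ∧ m v ≤ 8 := by
  rw [d_eq, m_eq]
  fin_cases v
  · exact absurd rfl hv
  all_goals
    simp (config := { decide := true }) only [dt, st]
  all_goals norm_num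

lemma edge_bound (a b : Fin 20) (h : G.Adj a b) :
    2 + (m a + m b) - (d a + d b) +
      Real.sqrt (2 * (d a ^ 2 + d b ^ 2) - 4 * (m a + m b) + 4) < 20 := by
  rcases eq_or_ne a 0 with ha | ha
  · subst ha
    have hb : b ≠ 0 := h.ne'
    obtain ⟨h1, h2, h3, h4⟩ := small b hb
    rw [d0, m0]
    have hq : 2 * ((19 : ℝ) ^ 2 + d b ^ 2) - 4 * (77 / 19 + m b) + 4 < 27.1 ^ 2 := by
      nlinarith
    have hs := (Real.sqrt_lt' (by norm_num : (0:ℝ) < 27.1)).mpr hq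
    linarith
  · rcases eq_or_ne b 0 with hb | hb
    · subst hb
      have ha' : a ≠ 0 := h.ne
      obtain ⟨h1, h2, h3, h4⟩ := small a ha'
      rw [d0, m0]
      have hq : 2 * (d a ^ 2 + (19 : ℝ) ^ 2) - 4 * (m a + 77 / 19) + 4 < 27.1 ^ 2 := by
        nlinarith
      have hs := (Real.sqrt_lt' (by norm_num : (0:ℝ) < 27.1)).mpr hq
      linarith
    · obtain ⟨h1, h2, h3, h4⟩ := small a ha
      obtain ⟨k1, k2, k3, k4⟩ := small b hb
      have hq : 2 * (d a ^ 2 + d b ^ 2) - 4 * (m a + m b) + 4 < 7 ^ 2 := by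
        nlinarith
      have hs := (Real.sqrt_lt' (by norm_num : (0:ℝ) < 7)).mpr hq
      linarith

/-- the test eigenvector for eigenvalue 20 -/
noncomputable def xv : Fin 20 → ℝ := fun i => if i = 0 then 19 else -1

lemma lap_mulVec : (G.lapMatrix ℝ).mulVec xv = (20 : ℝ) • xv := by
  funext i
  fin_cases i <;>
    · simp (config := { decide := true }) [Matrix.mulVec, dotProduct,
        SimpleGraph.lapMatrix, SimpleGraph.degMatrix, SimpleGraph.adjMatrix,
        Matrix.sub_apply, Matrix.diagonal_apply, Matrix.of_apply,
        Fin.sum_univ_succ, xv, hdeg, dt]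
      simp (config := { decide := true }) only [Finset.card_filter, Fin.sum_univ_succ, Fin.sum_univ_zero]
      norm_num

lemma mem_spectrum_of_mulVec {n : Type*} [Fintype n] [DecidableEq n] (M : Matrix n n ℝ)
    (c : ℝ) (v : n → ℝ) (hv : v ≠ 0) (hMv : M.mulVec v = c • v) : c ∈ spectrum ℝ M := by
  rw [spectrum.mem_iff]
  intro hunit
  rw [Matrix.isUnit_iff_isUnit_det] at hunit
  have h1 : (algebraMap ℝ (Matrix n n ℝ) c).mulVec v = c • v := by
    rw [Algebra.algebraMap_eq_smul_one, Matrix.smul_mulVec, Matrix.one_mulVec]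
  have hdet : (algebraMap ℝ (Matrix n n ℝ) c - M).det = 0 := by
    rw [← Matrix.exists_mulVec_eq_zero_iff]
    exact ⟨v, hv, by rw [Matrix.sub_mulVec, h1, hMv, sub_self]⟩
  rw [hdet] at hunit
  simp at hunit

lemma twenty_mem : (20 : ℝ) ∈ spectrum ℝ (G.lapMatrix ℝ) := by
  refine mem_spectrum_of_mulVec _ _ xv ?_ lap_mulVec
  intro hx
  have := congrFun hx 1
  simp [xv] at this

theorem laplacian_spectral_radius_exceeds_bound (μ : ℝ)
    (hmem : μ ∈ spectrum ℝ (G.lapMatrix ℝ))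
    (hmax : ∀ ν ∈ spectrum ℝ (G.lapMatrix ℝ), ν ≤ μ) :
    (Finset.univ.filter fun p : _ × _ => G.Adj p.1 p.2).sup' (by decide)
      (fun p => 2 + (m p.1 + m p.2) - (d p.1 + d p.2) + Real.sqrt (2 * (d p.1 ^ 2 + d p.2 ^ 2) - 4 * (m p.1 + m p.2) + 4)) < μ := by
  have hμ : (20 : ℝ) ≤ μ := hmax 20 twenty_mem
  rw [Finset.sup'_lt_iff]
  intro p hp
  rw [Finset.mem_filter] at hp
  exact lt_of_lt_of_le (edge_bound p.1 p.2 hp.2) hμ
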